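/- Let A, B, C be k-linear categories, F: A → B and G, H: B → C k-linear functors, and σ: G ⇒ H a natural transformation, with whiskering σ_F: G∘F ⇒ H∘F given by (σ_F)_X = σ_{F(X)}. Let C^•(D) be the cochain complex with C^m(D) = C^{m+2}(A) ⊕ C^{m+2}(B) ⊕ C^{m+2}(C) ⊕ C^{m+1}(F) ⊕ C^{m+1}(G) ⊕ C^{m+1}(H) ⊕ C^m(G,H) and differential with rows [−d_A], [0, −d_B], [0, 0, −d_C], [−F_*, F^*, 0, d_F], [0, −G_*, G^*, 0, d_G], [0, −H_*, H^*, 0, 0, d_H], [0, 0, (−){σ}, 0, σ_*, −σ^*, −d_{G,H}]; and let C^•(D′) be the complex with C^m(D′) = C^{m+2}(A) ⊕ C^{m+2}(C) ⊕ C^{m+1}(G∘F) ⊕ C^{m+1}(H∘F) ⊕ C^m(G∘F, H∘F) and differential with rows [−d_A], [0, −d_C], [−(G∘F)_*, (G∘F)^*, d_{G∘F}], [−(H∘F)_*, (H∘F)^*, 0, d_{H∘F}], [0, (−){σ_F}, (σ_F)_*, −(σ_F)^*, −d_{G∘F,H∘F}]. Then the matrix of maps ∘_{1,l} with rows [Id_{C^{m+2}(A)},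 0, 0, 0, 0, 0, 0], [0, 0, Id_{C^{m+2}(C)}, 0, 0, 0, 0], [0, 0, 0, G_*, F^*, 0, 0], [0, 0, 0, H_*, 0, F^*, 0], [0, 0, 0, 0, 0, 0, F^*] defines a map of cochain complexes ∘_{1,l}: C^•(D) → C^•(D′). -/

import Mathlib

open CategoryTheory

universe v u v' u' v'' u''

/-- A composable `n`-tuple of morphisms in `A`, from `X` to `Y`
(written with the last morphism outermost). -/
inductive HPath {A : Type u} [Category.{v} A] : A → A → ℕ → Type (max u v)
  | nil (X : A) : HPath X X 0
  | cons {X Y Z : A} {n : ℕ} (p : HPath X Y n) (f : Y ⟶ Z) : HPath X Z (n + 1)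

/-- The Hochschild cochain group `C^n(F,G)`: families assigning to each composable
`n`-tuple `f₁,…,fₙ` (from `X` to `Y`) a morphism `F X ⟶ G Y`. -/
abbrev HCochain {A : Type u} [Category.{v} A] {B : Type u'} [Category.{v'} B]
    (F G : A ⥤ B) (n : ℕ) :=
  ∀ (X Y : A), HPath X Y n → (F.obj X ⟶ G.obj Y)

/-- Applying a functor to each morphism of a composable tuple. -/
def HPath.mapP {A : Type u} [Category.{v} A] {B : Type u'} [Category.{v'} B] (F : A ⥤ B) :
    ∀ {n : ℕ} {X Y : A}, HPath X Y n → HPath (F.obj X) (F.obj Y) n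
  | _, _, _, .nil X => .nil (F.obj X)
  | _, _, _, .cons p f => .cons (p.mapP F) (F.map f)

section TwoCats
variable {A : Type u} [Category.{v} A] {B : Type u'} [Category.{v'} B] [Preadditive B]

/-- Auxiliary recursion for the Hochschild coboundary: `Σ_{j=1}^{n+1} (-1)^{j-1} ∂_j`,
where `∂_j` composes the pair at position `n+1-j` (counted from the left, 1-based),
and `∂_{n+1}` is `ψ(f₂,…,f_{n+1}) ∘ F(f₁)`. -/
def dAux (F : A ⥤ B) {T : B} :
    ∀ (n : ℕ) (W X : A), HPath X W (n + 1) →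
      (∀ V : A, HPath V W n → (F.obj V ⟶ T)) → (F.obj X ⟶ T)
  | 0, W, _, .cons (.nil _) f, ψ => F.map f ≫ ψ W (.nil W)
  | m + 1, _, X, .cons (.cons p g) f, ψ =>
      ψ _ (.cons p (g ≫ f)) - dAux F m _ X (.cons p g) (fun V r => ψ V (.cons r f))

/-- The Hochschild coboundary
`d(φ)(f₁,…,f_{n+1}) = G(f_{n+1})∘φ(f₁,…,fₙ) + Σ_{i=1}^{n} (−1)^{n+1−i} φ(f₁,…,f_{i+1}∘f_i,…,f_{n+1})
 + (−1)^{n+1} φ(f₂,…,f_{n+1})∘F(f₁)`. -/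
def dHoch {F G : A ⥤ B} {n : ℕ} (φ : HCochain F G n) : HCochain F G (n + 1) :=
  fun X Z q =>
    match q with
    | .cons p f => (φ _ _ p ≫ G.map f) - dAux F n Z X (.cons p f) (fun V r => φ V Z r)

/-- `F_* : C^n(A) → C^n(F)`. -/
def pushA (F : A ⥤ B) {n : ℕ} (φ : HCochain (𝟭 A) (𝟭 A) n) : HCochain F F n :=
  fun X Y p => F.map (φ X Y p)

/-- `F^* : C^n(B) → C^n(F)`. -/
def pullB (F : A ⥤ B) {n : ℕ} (φ : HCochain (𝟭 B) (𝟭 B) n) : HCochain F F n :=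
  fun _ _ p => φ _ _ (p.mapP F)

/-- `σ_*` : post-composition with the components of `σ`. -/
def natPost {F G K : A ⥤ B} (σ : G ⟶ K) {n : ℕ} (φ : HCochain F G n) : HCochain F K n :=
  fun X Y p => φ X Y p ≫ σ.app Y

/-- `σ^*` : pre-composition with the components of `σ`. -/
def natPre {F G K : A ⥤ B} (σ : F ⟶ G) {n : ℕ} (φ : HCochain G K n) : HCochain F K n :=
  fun X Y p => σ.app X ≫ φ X Y p

end TwoCats

section ThreeCats
variable {A : Type u} [Category.{v} A] {B : Type u'} [Category.{v'} B]
  {E : Type u''} [Category.{v''} E]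

/-- `K_* : C^n(F,G) → C^n(K∘F, K∘G)`. -/
def pushGen (K : B ⥤ E) {F G : A ⥤ B} {n : ℕ} (φ : HCochain F G n) :
    HCochain (F ⋙ K) (G ⋙ K) n :=
  fun X Y p => K.map (φ X Y p)

/-- `E^* : C^n(F,G) → C^n(F∘E, G∘E)`. -/
def pullGen (K : A ⥤ B) {F G : B ⥤ E} {n : ℕ} (φ : HCochain F G n) :
    HCochain (K ⋙ F) (K ⋙ G) n :=
  fun _ _ p => φ _ _ (p.mapP K)

variable [Preadditive E]

/-- Auxiliary recursion for the brace `φ{σ}`. -/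
def braceAux {P Q : A ⥤ B} (σ : P ⟶ Q) (K : B ⥤ E) {T : E} :
    ∀ (n : ℕ) (Y X : A), HPath X Y n →
      (∀ V : B, HPath V (Q.obj Y) (n + 1) → (K.obj V ⟶ T)) → (K.obj (P.obj X) ⟶ T)
  | 0, _, _, .nil X, ψ => ψ (P.obj X) (.cons (.nil (P.obj X)) (σ.app X))
  | m + 1, Y, X, .cons p f, ψ =>
      braceAux σ K m _ X p (fun V q => ψ V (.cons q (Q.map f))) +
        ((-1 : ℤ) ^ (m + 1)) • ψ (P.obj X) (.cons ((p.cons f).mapP P) (σ.app Y))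

/-- Auxiliary recursion for the double brace `φ{σ,τ}`. -/
def dbraceAux {P Q R : A ⥤ B} (σ : P ⟶ Q) (τ : Q ⟶ R) (K : B ⥤ E) {T : E} :
    ∀ (n : ℕ) (Y X : A), HPath X Y n →
      (∀ V : B, HPath V (R.obj Y) (n + 2) → (K.obj V ⟶ T)) → (K.obj (P.obj X) ⟶ T)
  | 0, _, _, .nil X, ψ =>
      ψ (P.obj X) (.cons (.cons (.nil (P.obj X)) (σ.app X)) (τ.app X))
  | m + 1, Y, X, .cons p f, ψ =>
      dbraceAux σ τ K m _ X p (fun V q => ψ V (.cons q (R.map f))) +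
        ((-1 : ℤ) ^ (m + 1)) •
          braceAux σ K (m + 1) Y X (p.cons f) (fun V q => ψ V (.cons q (τ.app Y)))

/-- Auxiliary recursion for the triple brace `φ{σ,τ,υ}`. -/
def tbraceAux {P Q R S : A ⥤ B} (σ : P ⟶ Q) (τ : Q ⟶ R) (υ : R ⟶ S) (K : B ⥤ E) {T : E} :
    ∀ (n : ℕ) (Y X : A), HPath X Y n →
      (∀ V : B, HPath V (S.obj Y) (n + 3) → (K.obj V ⟶ T)) → (K.obj (P.obj X) ⟶ T)
  | 0, _, _, .nil X, ψ =>
      ψ (P.obj X) (.cons (.cons (.cons (.nil (P.obj X)) (σ.app X)) (τ.app X)) (υ.app X))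
  | m + 1, Y, X, .cons p f, ψ =>
      tbraceAux σ τ υ K m _ X p (fun V q => ψ V (.cons q (S.map f))) +
        ((-1 : ℤ) ^ (m + 1)) •
          dbraceAux σ τ K (m + 1) Y X (p.cons f) (fun V q => ψ V (.cons q (υ.app Y)))

end ThreeCats

section Braces
variable {A : Type u} [Category.{v} A] {B : Type u'} [Category.{v'} B] [Preadditive B]

/-- The brace `(−){σ} : C^{n+1}(B) → C^n(P,Q)` for a natural transformation `σ : P ⟹ Q`:
`φ{σ}(f₁,…,fₙ) = Σ_{i=0}^{n} (−1)^i φ(P f₁,…,P f_i, σ_{A_i}, Q f_{i+1},…,Q fₙ)`. -/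
def braceId {P Q : A ⥤ B} (σ : P ⟶ Q) {n : ℕ} (φ : HCochain (𝟭 B) (𝟭 B) (n + 1)) :
    HCochain P Q n :=
  fun X Y p => braceAux σ (𝟭 B) (T := Q.obj Y) n Y X p (fun V q => φ V (Q.obj Y) q)

/-- The double brace `(−){σ,τ} : C^{n+2}(B) → C^n(P,R)`. -/
def dbraceId {P Q R : A ⥤ B} (σ : P ⟶ Q) (τ : Q ⟶ R) {n : ℕ}
    (φ : HCochain (𝟭 B) (𝟭 B) (n + 2)) : HCochain P R n :=
  fun X Y p => dbraceAux σ τ (𝟭 B) (T := R.obj Y) n Y X p (fun V q => φ V (R.obj Y) q)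

/-- The triple brace `(−){σ,τ,υ} : C^{n+3}(B) → C^n(P,S)`. -/
def tbraceId {P Q R S : A ⥤ B} (σ : P ⟶ Q) (τ : Q ⟶ R) (υ : R ⟶ S) {n : ℕ}
    (φ : HCochain (𝟭 B) (𝟭 B) (n + 3)) : HCochain P S n :=
  fun X Y p => tbraceAux σ τ υ (𝟭 B) (T := S.obj Y) n Y X p (fun V q => φ V (S.obj Y) q)

end Braces

section BraceFun
variable {A : Type u} [Category.{v} A] {B : Type u'} [Category.{v'} B]
  {E : Type u''} [Category.{v''} E] [Preadditive E]

/-- The brace `(−){σ} : C^{n+1}(H) → C^n(H∘F, H∘G)` for `σ : F ⟹ G` and a functor `H : B ⥤ E`. -/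
def braceFun {F G : A ⥤ B} (σ : F ⟶ G) (H : B ⥤ E) {n : ℕ} (φ : HCochain H H (n + 1)) :
    HCochain (F ⋙ H) (G ⋙ H) n :=
  fun X Y p => braceAux σ H (T := H.obj (G.obj Y)) n Y X p (fun V q => φ V (G.obj Y) q)

end BraceFun

/-! Precomposition `F^*` commutes with the Hochschild coboundary and turns `σ_*`, `σ^*` and
`(−){σ}` into `(σ_F)_*`, `(σ_F)^*` and `(−){σ_F}`; postcomposition `K_*` with an additive functor
commutes with the coboundary and with `F^*`. So the two composites agree entry by entry, except
for the terms `(σ_F)_* G_* φ_F` and `(σ_F)^* H_* φ_F` of the last row, which cancel by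
naturality of `σ`. -/

section Functoriality
variable {A : Type u} [Category.{v} A] {B : Type u'} [Category.{v'} B]
  {E : Type u''} [Category.{v''} E]

theorem HPath.mapP_mapP (F : A ⥤ B) (G : B ⥤ E) :
    ∀ {n : ℕ} {X Y : A} (p : HPath X Y n), (p.mapP F).mapP G = p.mapP (F ⋙ G)
  | _, _, _, .nil _ => rfl
  | _, _, _, .cons p f => by
      simp only [HPath.mapP, HPath.mapP_mapP F G p]
      rfl

theorem pullB_comp (F : A ⥤ B) (G : B ⥤ E) {n : ℕ} (φ : HCochain (𝟭 E) (𝟭 E) n) :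
    pullB (F ⋙ G) φ = pullGen F (pullB G φ) := by
  funext X Y p
  simp [pullB, pullGen, HPath.mapP_mapP]

theorem natPost_whiskerLeft_pullGen (K : A ⥤ B) {F G H : B ⥤ E} (σ : G ⟶ H) {n : ℕ}
    (φ : HCochain F G n) :
    natPost (Functor.whiskerLeft K σ) (pullGen K φ) = pullGen K (natPost σ φ) := rfl

theorem natPre_whiskerLeft_pullGen (K : A ⥤ B) {F G H : B ⥤ E} (σ : F ⟶ G) {n : ℕ}
    (φ : HCochain G H n) :
    natPre (Functor.whiskerLeft K σ) (pullGen K φ) = pullGen K (natPre σ φ) := rfl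

theorem pushA_comp (F : A ⥤ B) (G : B ⥤ E) {n : ℕ} (φ : HCochain (𝟭 A) (𝟭 A) n) :
    pushA (F ⋙ G) φ = pushGen G (pushA F φ) := rfl

theorem pushGen_pullB (F : A ⥤ B) (G : B ⥤ E) {n : ℕ} (φ : HCochain (𝟭 B) (𝟭 B) n) :
    pushGen G (pullB F φ) = pullGen F (pushA G φ) := rfl

theorem natPost_whiskerLeft_pushGen (F : A ⥤ B) {G H : B ⥤ E} (σ : G ⟶ H) {n : ℕ}
    (φ : HCochain F F n) :
    natPost (Functor.whiskerLeft F σ) (pushGen G φ) =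
      natPre (Functor.whiskerLeft F σ) (pushGen H φ) := by
  funext X Y p
  exact σ.naturality (φ X Y p)

end Functoriality

section Coboundary
variable {A : Type u} [Category.{v} A] {B : Type u'} [Category.{v'} B] [Preadditive B]

theorem dAux_add (F : A ⥤ B) {T : B} :
    ∀ (n : ℕ) (W X : A) (q : HPath X W (n + 1))
      (ψ₁ ψ₂ : ∀ V : A, HPath V W n → (F.obj V ⟶ T)),
      dAux F n W X q (fun V r => ψ₁ V r + ψ₂ V r) =
        dAux F n W X q ψ₁ + dAux F n W X q ψ₂
  | 0, _, _, .cons (.nil _) _, _, _ => by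
      simp [dAux]
  | m + 1, _, X, .cons (.cons p g) f, ψ₁, ψ₂ => by
      simp only [dAux]
      rw [dAux_add F m _ X (.cons p g) (fun V r => ψ₁ V (.cons r f))
        (fun V r => ψ₂ V (.cons r f))]
      abel

theorem dHoch_cons {F G : A ⥤ B} {n : ℕ} (φ : HCochain F G n)
    {X Y Z : A} (p : HPath X Y n) (f : Y ⟶ Z) :
    dHoch φ X Z (.cons p f) =
      (φ X Y p ≫ G.map f) - dAux F n Z X (.cons p f) (fun V r => φ V Z r) := rfl

theorem dHoch_add {F G : A ⥤ B} {n : ℕ} (φ ψ : HCochain F G n) :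
    dHoch (φ + ψ) = dHoch φ + dHoch ψ := by
  funext X Z q
  cases q with
  | cons p f =>
    simp only [Pi.add_apply, dHoch_cons, dAux_add, Preadditive.add_comp]
    abel

variable {E : Type u''} [Category.{v''} E] [Preadditive E]

theorem map_dAux (K : B ⥤ E) [K.Additive] (F : A ⥤ B) {T : B} :
    ∀ (n : ℕ) (W X : A) (q : HPath X W (n + 1))
      (ψ : ∀ V : A, HPath V W n → (F.obj V ⟶ T)),
      K.map (dAux F n W X q ψ) = dAux (F ⋙ K) n W X q (fun V r => K.map (ψ V r))
  | 0, _, _, .cons (.nil _) _, _ => by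
      simp [dAux]
  | m + 1, _, X, .cons (.cons p g) _, _ => by
      simp only [dAux, Functor.map_sub, map_dAux K F m _ X (.cons p g)]

theorem dHoch_pushGen (K : B ⥤ E) [K.Additive] {F G : A ⥤ B} {n : ℕ}
    (φ : HCochain F G n) :
    dHoch (pushGen K φ) = pushGen K (dHoch φ) := by
  funext X Z q
  cases q with
  | cons p f =>
    simp only [pushGen, dHoch_cons, Functor.map_sub, Functor.map_comp, map_dAux]
    rfl

end Coboundary

section Precomposition
variable {A : Type u} [Category.{v} A] {B : Type u'} [Category.{v'} B]
  {E : Type u''} [Category.{v''} E] [Preadditive E]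

theorem dAux_mapP (K : A ⥤ B) (F : B ⥤ E) {T : E} :
    ∀ (n : ℕ) (W X : A) (q : HPath X W (n + 1))
      (ψ : ∀ V : B, HPath V (K.obj W) n → (F.obj V ⟶ T)),
      dAux (K ⋙ F) n W X q (fun V r => ψ (K.obj V) (r.mapP K)) =
        dAux F n (K.obj W) (K.obj X) (q.mapP K) ψ
  | 0, _, _, .cons (.nil _) _, _ => rfl
  | m + 1, _, X, .cons (.cons p g) f, ψ => by
      simp only [dAux, HPath.mapP, Functor.map_comp]
      rw [dAux_mapP K F m _ X (.cons p g) (fun V r => ψ V (.cons r (K.map f)))]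
      rfl

theorem dHoch_pullGen (K : A ⥤ B) {F G : B ⥤ E} {n : ℕ} (φ : HCochain F G n) :
    dHoch (pullGen K φ) = pullGen K (dHoch φ) := by
  funext X Z q
  cases q with
  | cons p f =>
    simp only [pullGen, dHoch_cons]
    rw [dAux_mapP K F n Z X (.cons p f) (fun V r => φ V (K.obj Z) r)]
    rfl

theorem braceAux_whiskerLeft {B' : Type*} [Category B'] (F : A ⥤ B')
    {G H : B' ⥤ B} (σ : G ⟶ H) (K : B ⥤ E) {T : E} :
    ∀ (n : ℕ) (Y X : A) (p : HPath X Y n)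
      (ψ : ∀ V : B, HPath V (H.obj (F.obj Y)) (n + 1) → (K.obj V ⟶ T)),
      braceAux (Functor.whiskerLeft F σ) K n Y X p ψ =
        braceAux σ K n (F.obj Y) (F.obj X) (p.mapP F) ψ
  | 0, _, _, .nil _, _ => rfl
  | m + 1, _, X, .cons p _, _ => by
      simp only [braceAux, HPath.mapP, ← HPath.mapP_mapP]
      rw [braceAux_whiskerLeft F σ K m _ X p]
      rfl

theorem braceId_whiskerLeft (K : A ⥤ B) {G H : B ⥤ E} (σ : G ⟶ H) {n : ℕ}
    (φ : HCochain (𝟭 E) (𝟭 E) (n + 1)) :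
    braceId (Functor.whiskerLeft K σ) φ = pullGen K (braceId σ φ) := by
  funext X Y p
  exact braceAux_whiskerLeft K σ (𝟭 E) n Y X p (fun V q => φ V (H.obj (K.obj Y)) q)

end Precomposition

section Additivity
variable {A : Type u} [Category.{v} A] {B : Type u'} [Category.{v'} B]
  {E : Type u''} [Category.{v''} E] [Preadditive E]

theorem pushGen_add [Preadditive B] (K : B ⥤ E) [K.Additive] {F G : A ⥤ B} {n : ℕ}
    (φ ψ : HCochain F G n) : pushGen K (φ + ψ) = pushGen K φ + pushGen K ψ := by
  funext X Y p
  simp [pushGen]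

theorem pushGen_neg [Preadditive B] (K : B ⥤ E) [K.Additive] {F G : A ⥤ B} {n : ℕ}
    (φ : HCochain F G n) : pushGen K (-φ) = -pushGen K φ := by
  funext X Y p
  simp [pushGen]

theorem natPost_add {F G K : A ⥤ E} (σ : G ⟶ K) {n : ℕ} (φ ψ : HCochain F G n) :
    natPost σ (φ + ψ) = natPost σ φ + natPost σ ψ := by
  funext X Y p
  simp [natPost]

theorem natPre_add {F G K : A ⥤ E} (σ : F ⟶ G) {n : ℕ} (φ ψ : HCochain G K n) :
    natPre σ (φ + ψ) = natPre σ φ + natPre σ ψ := by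
  funext X Y p
  simp [natPre]

theorem pullGen_add (K : A ⥤ B) {F G : B ⥤ E} {n : ℕ} (φ ψ : HCochain F G n) :
    pullGen K (φ + ψ) = pullGen K φ + pullGen K ψ := rfl

theorem pullGen_neg (K : A ⥤ B) {F G : B ⥤ E} {n : ℕ} (φ : HCochain F G n) :
    pullGen K (-φ) = -pullGen K φ := rfl

theorem pullGen_sub (K : A ⥤ B) {F G : B ⥤ E} {n : ℕ} (φ ψ : HCochain F G n) :
    pullGen K (φ - ψ) = pullGen K φ - pullGen K ψ := rfl

end Additivity

section Components
variable {A : Type u} [Category.{v} A] {B : Type u'} [Category.{v'} B]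
  {C : Type u''} [Category.{v''} C] [Preadditive C]

theorem comp1l_functor_component [Preadditive B] (F : A ⥤ B) (K : B ⥤ C) [K.Additive] {m : ℕ}
    (φA : HCochain (𝟭 A) (𝟭 A) (m + 1)) (φB : HCochain (𝟭 B) (𝟭 B) (m + 1))
    (φC : HCochain (𝟭 C) (𝟭 C) (m + 1)) (φF : HCochain F F m) (φK : HCochain K K m) :
    -pushA (F ⋙ K) φA + pullB (F ⋙ K) φC + dHoch (pushGen K φF + pullGen F φK) =
      pushGen K (-pushA F φA + pullB F φB + dHoch φF) +
        pullGen F (-pushA K φB + pullB K φC + dHoch φK) := by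
  rw [dHoch_add, dHoch_pushGen, dHoch_pullGen, pushA_comp, pullB_comp, pushGen_add,
    pushGen_add, pushGen_neg, pullGen_add, pullGen_add, pullGen_neg, pushGen_pullB]
  abel

theorem comp1l_transformation_component (F : A ⥤ B) {G H : B ⥤ C} (σ : G ⟶ H) {m : ℕ}
    (φC : HCochain (𝟭 C) (𝟭 C) (m + 2)) (φF : HCochain F F (m + 1))
    (φG : HCochain G G (m + 1)) (φH : HCochain H H (m + 1)) (φGH : HCochain G H m) :
    braceId (Functor.whiskerLeft F σ) φC +
        natPost (Functor.whiskerLeft F σ) (pushGen G φF + pullGen F φG) -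
        natPre (Functor.whiskerLeft F σ) (pushGen H φF + pullGen F φH) -
        dHoch (pullGen F φGH) =
      pullGen F (braceId σ φC + natPost σ φG - natPre σ φH - dHoch φGH) := by
  rw [braceId_whiskerLeft, natPost_add, natPre_add, natPost_whiskerLeft_pushGen,
    natPost_whiskerLeft_pullGen, natPre_whiskerLeft_pullGen, dHoch_pullGen,
    pullGen_sub, pullGen_sub, pullGen_add]
  abel

end Components
section Statement1

variable (k : Type w) [Field k]
variable {A : Type u} [Category.{v} A] [Preadditive A] [Linear k A]
variable {B : Type u'} [Category.{v'} B] [Preadditive B] [Linear k B]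
variable {C : Type u''} [Category.{v''} C] [Preadditive C] [Linear k C]

/-- Degree-`m` part of the deformation complex `C^•(D)` for `F : A ⥤ B`,
`G, H : B ⥤ C` and `σ : G ⟹ H`. -/
abbrev CD1 (F : A ⥤ B) (G H : B ⥤ C) (m : ℕ) :=
  HCochain (𝟭 A) (𝟭 A) (m + 2) × HCochain (𝟭 B) (𝟭 B) (m + 2) ×
    HCochain (𝟭 C) (𝟭 C) (m + 2) × HCochain F F (m + 1) ×
    HCochain G G (m + 1) × HCochain H H (m + 1) × HCochain G H m

/-- Degree-`m` part of the deformation complex `C^•(D′)` of the whiskered diagram,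
with `G∘F = F ⋙ G` and `H∘F = F ⋙ H`. -/
abbrev CD1' (F : A ⥤ B) (G H : B ⥤ C) (m : ℕ) :=
  HCochain (𝟭 A) (𝟭 A) (m + 2) × HCochain (𝟭 C) (𝟭 C) (m + 2) ×
    HCochain (F ⋙ G) (F ⋙ G) (m + 1) × HCochain (F ⋙ H) (F ⋙ H) (m + 1) ×
    HCochain (F ⋙ G) (F ⋙ H) m

/-- The differential of `C^•(D)`. -/
def dD1 (F : A ⥤ B) (G H : B ⥤ C) (σ : G ⟶ H) (m : ℕ) :
    CD1 F G H m → CD1 F G H (m + 1) :=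
  fun ⟨φA, φB, φC, φF, φG, φH, φGH⟩ =>
    (-(dHoch φA), -(dHoch φB), -(dHoch φC),
      -(pushA F φA) + pullB F φB + dHoch φF,
      -(pushA G φB) + pullB G φC + dHoch φG,
      -(pushA H φB) + pullB H φC + dHoch φH,
      braceId σ φC + natPost σ φG - natPre σ φH - dHoch φGH)

/-- The differential of `C^•(D′)`, where `υ = σ_F` is the whiskering of `σ` by `F`. -/
def dD1' (F : A ⥤ B) (G H : B ⥤ C) (υ : F ⋙ G ⟶ F ⋙ H) (m : ℕ) :
    CD1' F G H m → CD1' F G H (m + 1) :=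
  fun ⟨φA, φC, φGF, φHF, φc⟩ =>
    (-(dHoch φA), -(dHoch φC),
      -(pushA (F ⋙ G) φA) + pullB (F ⋙ G) φC + dHoch φGF,
      -(pushA (F ⋙ H) φA) + pullB (F ⋙ H) φC + dHoch φHF,
      braceId υ φC + natPost υ φGF - natPre υ φHF - dHoch φc)

/-- The matrix of maps `∘_{1,l} : C^•(D) → C^•(D′)` induced by
precomposition with `F`. -/
def comp1l (F : A ⥤ B) (G H : B ⥤ C) (m : ℕ) : CD1 F G H m → CD1' F G H m :=
  fun ⟨φA, _φB, φC, φF, φG, φH, φGH⟩ =>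
    (φA, φC,
      pushGen G φF + pullGen F φG,
      pushGen H φF + pullGen F φH,
      pullGen F φGH)

theorem comp1l_is_cochain_map_general
    (F : A ⥤ B) (G H : B ⥤ C) [G.Additive] [H.Additive] (σ : G ⟶ H) :
    ∀ (m : ℕ) (x : CD1 F G H m),
      dD1' F G H (Functor.whiskerLeft F σ) m (comp1l F G H m x) =
        comp1l F G H (m + 1) (dD1 F G H σ m x) := by
  rintro m ⟨φA, φB, φC, φF, φG, φH, φGH⟩
  simp only [dD1, dD1', comp1l, Prod.mk.injEq]
  exact ⟨trivial, trivial, comp1l_functor_component F G φA φB φC φF φG,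
    comp1l_functor_component F H φA φB φC φF φH,
    comp1l_transformation_component F σ φC φF φG φH φGH⟩

/-- The matrix `∘_{1,l}` defines a map of cochain complexes
`C^•(D) → C^•(D′)`. -/
theorem comp1l_is_cochain_map
    (F : A ⥤ B) (G H : B ⥤ C) [F.Additive] [Functor.Linear k F]
    [G.Additive] [Functor.Linear k G] [H.Additive] [Functor.Linear k H]
    (σ : G ⟶ H) :
    ∀ (m : ℕ) (x : CD1 F G H m),
      dD1' F G H (Functor.whiskerLeft F σ) m (comp1l F G H m x) =
        comp1l F G H (m + 1) (dD1 F G H σ m x) :=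
  comp1l_is_cochain_map_general F G H σ

end Statement1
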